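/- Let p ≥ 1, let q be a real polynomial of degree at most p−1, and let Q : ℝ^{p−1} → ℝ be a symmetric multiaffine function with Q(ξ,…,ξ) = q(ξ) for all ξ ∈ ℝ. Let ω₀, ω₁ ∈ ℝ and L(ξ) = ω₀(1−ξ) + ω₁ξ. Then the function R : ℝ^p → ℝ defined by R(t₁,…,t_p) = (1/p) · Σ_{m=1}^{p} Q(t₁,…,t_{m−1}, t_{m+1},…,t_p) · L(t_m) is symmetric, multiaffine, and satisfies R(ξ,…,ξ) = L(ξ)·q(ξ) for all ξ ∈ ℝ; that is, R is the blossom of the product polynomial L·q. -/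

import Mathlib

/-!
Each summand `Q(t without t_m) · L(t_m)` is affine in every variable: in `t_m` through `L`, in the
others through `Q`. Permuting the arguments by `σ` permutes the summands, because deleting the
`m`-th entry of `t ∘ σ` gives the deletion of the `σ m`-th entry of `t` up to a permutation of the
remaining `p - 1` arguments, which `Q` ignores. On the diagonal all `p` summands equal `q(ξ) L(ξ)`.
-/

open Function Finset

namespace Fin

variable {n : ℕ}

theorem removeNth_apply_eq_ite {α : Type*} (m : Fin (n + 1)) (x : Fin (n + 1) → α) (j : Fin n) :
    m.removeNth x j = if (j : ℕ) < m then x ⟨j, by omega⟩ else x ⟨j + 1, by omega⟩ := by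
  simp only [removeNth, succAbove, lt_def, val_castSucc]
  split <;> rfl

theorem exists_perm_comp_succAbove (σ : Equiv.Perm (Fin (n + 1))) (m : Fin (n + 1)) :
    ∃ τ : Equiv.Perm (Fin n), σ ∘ m.succAbove = (σ m).succAbove ∘ τ := by
  let σ' : {x // x ≠ m} ≃ {y // y ≠ σ m} := σ.subtypeEquiv fun _ ↦ σ.injective.ne_iff.symm
  refine ⟨(finSuccAboveEquiv m).trans (σ'.trans (finSuccAboveEquiv (σ m)).symm), funext fun j ↦ ?_⟩
  exact (congrArg Subtype.val
    ((finSuccAboveEquiv (σ m)).apply_symm_apply (σ' (finSuccAboveEquiv m j)))).symm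

theorem sum_removeNth_comp_perm {α M : Type*} [AddCommMonoid M] (F : (Fin n → α) → α → M)
    (hF : ∀ (τ : Equiv.Perm (Fin n)) y a, F (y ∘ τ) a = F y a)
    (σ : Equiv.Perm (Fin (n + 1))) (x : Fin (n + 1) → α) :
    ∑ m, F (m.removeNth (x ∘ σ)) (x (σ m)) = ∑ m, F (m.removeNth x) (x m) := by
  refine Eq.trans (sum_congr rfl fun m _ ↦ ?_) (Equiv.sum_comp σ fun m ↦ F (m.removeNth x) (x m))
  obtain ⟨τ, hτ⟩ := exists_perm_comp_succAbove σ m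
  change F (x ∘ (σ ∘ m.succAbove)) _ = F (x ∘ (σ m).succAbove) _
  rw [hτ, ← comp_assoc, hF]

end Fin

section Affine

variable {R : Type*} [CommRing R]

def IsAffineFun (f : R → R) : Prop :=
  ∃ a b : R, ∀ t, f t = a + b * t

def IsMultiaffine {ι : Type*} [DecidableEq ι] (F : (ι → R) → R) : Prop :=
  ∀ i x, IsAffineFun fun t ↦ F (update x i t)

namespace IsAffineFun

theorem mul_const {f : R → R} (hf : IsAffineFun f) (c : R) : IsAffineFun fun t ↦ f t * c := by
  obtain ⟨a, b, hab⟩ := hf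
  exact ⟨a * c, b * c, fun t ↦ by dsimp only; rw [hab]; ring⟩

theorem const_mul {f : R → R} (hf : IsAffineFun f) (c : R) : IsAffineFun fun t ↦ c * f t := by
  simpa only [mul_comm c] using hf.mul_const c

theorem sum {ι : Type*} (s : Finset ι) {f : ι → R → R} (hf : ∀ i ∈ s, IsAffineFun (f i)) :
    IsAffineFun fun t ↦ ∑ i ∈ s, f i t := by
  choose! a b hab using hf
  exact ⟨∑ i ∈ s, a i, ∑ i ∈ s, b i, fun t ↦ by
    rw [sum_mul, ← sum_add_distrib]; exact sum_congr rfl fun i hi ↦ hab i hi t⟩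

end IsAffineFun

namespace IsMultiaffine

variable {ι : Type*} [DecidableEq ι]

theorem const_mul {F : (ι → R) → R} (hF : IsMultiaffine F) (c : R) :
    IsMultiaffine fun x ↦ c * F x :=
  fun i x ↦ (hF i x).const_mul c

theorem sum {κ : Type*} (s : Finset κ) {F : κ → (ι → R) → R}
    (hF : ∀ k ∈ s, IsMultiaffine (F k)) : IsMultiaffine fun x ↦ ∑ k ∈ s, F k x :=
  fun i x ↦ IsAffineFun.sum s fun k hk ↦ hF k hk i x

theorem removeNth_mul {n : ℕ} {Q : (Fin n → R) → R} (hQ : IsMultiaffine Q) {L : R → R}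
    (hL : IsAffineFun L) (m : Fin (n + 1)) :
    IsMultiaffine fun x ↦ Q (m.removeNth x) * L (x m) := by
  intro i x
  rcases eq_or_ne i m with rfl | him
  · simpa only [Fin.removeNth_update, update_self] using hL.const_mul (Q (i.removeNth x))
  · obtain ⟨k, rfl⟩ := Fin.exists_succAbove_eq him
    simpa only [Fin.removeNth_update_succAbove, update_of_ne him.symm]
      using (hQ k (m.removeNth x)).mul_const (L (x m))

end IsMultiaffine

end Affine

/-- **Multiplication formula for blossoms.**
If `Q : ℝ^(p-1) → ℝ` is the blossom of a polynomial `q` of degree at most `p-1` and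
`L(ξ) = ω₀(1-ξ) + ω₁ξ`, then
`R(t₁,…,t_p) = (1/p) · Σ_{m=1}^{p} Q(t₁,…,t_{m-1},t_{m+1},…,t_p) · L(t_m)`
is symmetric, multiaffine, and has diagonal `L·q`, i.e. it is the blossom of `L·q`. -/
theorem blossom_mul_affine (p : ℕ) (hp : 1 ≤ p) (q : Polynomial ℝ)
    (Q : (Fin (p - 1) → ℝ) → ℝ)
    (hQsym : ∀ (σ : Equiv.Perm (Fin (p - 1))) (x : Fin (p - 1) → ℝ), Q (x ∘ σ) = Q x)
    (hQaff : ∀ (i : Fin (p - 1)) (x : Fin (p - 1) → ℝ), ∃ a b : ℝ,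
      ∀ t : ℝ, Q (Function.update x i t) = a + b * t)
    (hQdiag : ∀ ξ : ℝ, Q (fun _ => ξ) = q.eval ξ)
    (ω₀ ω₁ : ℝ) (L : ℝ → ℝ) (hL : ∀ ξ : ℝ, L ξ = ω₀ * (1 - ξ) + ω₁ * ξ)
    (R : (Fin p → ℝ) → ℝ)
    (hR : ∀ x : Fin p → ℝ,
      R x = (1 / (p : ℝ)) * ∑ m : Fin p,
        Q (fun j : Fin (p - 1) =>
            if (j : ℕ) < (m : ℕ) then x ⟨j, by have := j.isLt; omega⟩
            else x ⟨(j : ℕ) + 1, by have := j.isLt; omega⟩) * L (x m)) :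
    (∀ (σ : Equiv.Perm (Fin p)) (x : Fin p → ℝ), R (x ∘ σ) = R x) ∧
    (∀ (i : Fin p) (x : Fin p → ℝ), ∃ a b : ℝ,
      ∀ t : ℝ, R (Function.update x i t) = a + b * t) ∧
    (∀ ξ : ℝ, R (fun _ => ξ) = L ξ * q.eval ξ) := by
  obtain ⟨n, rfl⟩ : ∃ n, p = n + 1 := ⟨p - 1, by omega⟩
  have hR_removeNth : R = fun x ↦ (1 / ((n + 1 : ℕ) : ℝ)) * ∑ m, Q (m.removeNth x) * L (x m) := by
    funext x
    rw [hR]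
    congr! with m
    exact (Fin.removeNth_apply_eq_ite m x _).symm
  have hLaff : IsAffineFun L := ⟨ω₀, ω₁ - ω₀, fun ξ ↦ by rw [hL]; ring⟩
  refine ⟨fun σ x ↦ ?_, ?_, fun ξ ↦ ?_⟩
  · rw [hR_removeNth]
    exact congrArg _ (Fin.sum_removeNth_comp_perm (fun y a ↦ Q y * L a)
      (fun τ y a ↦ by rw [hQsym]) σ x)
  · rw [hR_removeNth]
    exact (IsMultiaffine.sum _ fun m _ ↦ IsMultiaffine.removeNth_mul hQaff hLaff m).const_mul _
  · simp only [hR_removeNth, Fin.removeNth_fun_const, sum_const, card_univ, Fintype.card_fin,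
      nsmul_eq_mul]
    field_simp
    rw [mul_comm]
    exact congrArg _ (hQdiag ξ)
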